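/- arXiv:1109.3413 — 3 statements merged into one kernel-verified Lean document; each statement's English description precedes it below -/
import Mathlib

section
/- In the finitary symmetric group S_ℕ, the normalizer of the alternating subgroup S⁻(B) (finitely supported even permutations of an infinite set B ⊆ ℕ, fixing the complement pointwise) equals {g ∈ S_ℕ : g(B) = B}; in particular, if B has infinite complement or |B| ≥ 2, S⁻(B) is not self-normalizing since S⁺(B) ⊆ N(S⁻(B)) and S⁺(B) ≠ S⁻(B). -/
/-- The support of a product is contained in the union of supports. -/
theorem supp_mul_subset (a b : Equiv.Perm ℕ) :
    {x | (a * b) x ≠ x} ⊆ {x | a x ≠ x} ∪ {x | b x ≠ x} := by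
  intro x hx
  by_contra h
  simp only [Set.mem_union, Set.mem_setOf_eq, not_or, not_not] at h
  exact hx (by simp [Equiv.Perm.mul_apply, h.2, h.1])

theorem supp_inv_eq (a : Equiv.Perm ℕ) : {x | a⁻¹ x ≠ x} = {x | a x ≠ x} := by
  ext x
  simp only [Set.mem_setOf_eq, ne_eq, Equiv.Perm.inv_eq_iff_eq]
  exact not_congr eq_comm

/-- `S⁺(B)`: the group of finitely supported permutations of `ℕ` whose support
is contained in `B`. -/
def Splus (B : Set ℕ) : Subgroup (Equiv.Perm ℕ) where
  carrier := {g | {x | g x ≠ x}.Finite ∧ ∀ x, g x ≠ x → x ∈ B}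
  one_mem' := by simp
  mul_mem' := by
    rintro a b ⟨ha1, ha2⟩ ⟨hb1, hb2⟩
    refine ⟨(ha1.union hb1).subset (supp_mul_subset a b), fun x hx => ?_⟩
    rcases supp_mul_subset a b hx with h | h
    · exact ha2 x h
    · exact hb2 x h
  inv_mem' := by
    rintro a ⟨ha1, ha2⟩
    constructor
    · rw [supp_inv_eq]
      exact ha1
    · intro x hx
      have hx' : x ∈ {x | a x ≠ x} :=
        supp_inv_eq a ▸ (hx : x ∈ {x | a⁻¹ x ≠ x})
      exact ha2 x hx'

/-- `S_ℕ`: the group of all finitely supported permutations of `ℕ`. -/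
def SN : Subgroup (Equiv.Perm ℕ) := Splus Set.univ

/-- `S⁻(B)`: the finitary alternating group on `B`, generated by the products of
two transpositions of elements of `B`. -/
def Sminus (B : Set ℕ) : Subgroup (Equiv.Perm ℕ) :=
  Subgroup.closure {g | ∃ a b c d : ℕ, a ∈ B ∧ b ∈ B ∧ c ∈ B ∧ d ∈ B ∧
    a ≠ b ∧ c ≠ d ∧ g = Equiv.swap a b * Equiv.swap c d}

/-!
Conjugation by `g` carries the generators `(a b)(c d)` of `S⁻(B)` to those of `S⁻(g B)`, so `g`
normalizes `S⁻(B)` iff `S⁻(g B) = S⁻(B)`. For infinite `B` every point of `B` is moved by a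
3-cycle `(b c)(c d)` of `S⁻(B)`, while `S⁻(C)` moves only points of `C`; hence `S⁻(·)` is injective
on infinite sets and the normalizer is the setwise stabilizer of `B`. A transposition of two points
of `B` lies in `S⁺(B)` but not in `S⁻(B)`, whose elements are even on every large finite set.
-/

open Equiv Equiv.Perm

section FinitaryAlternating

/-- The finitely supported even permutations. Asking for evenness on every `T' ⊇ T`, rather than
on one finite `T`, spares us comparing signs on different finite sets. -/
def finitaryAlternatingGroup (α : Type*) [DecidableEq α] : Subgroup (Perm α) where
  carrier := {g | ∃ T : Finset α, ∀ T' ⊇ T, g ∈ (alternatingGroup T').map ofSubtype}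
  one_mem' := ⟨∅, fun _ _ => one_mem _⟩
  mul_mem' := by
    rintro g h ⟨T₁, hg⟩ ⟨T₂, hh⟩
    exact ⟨T₁ ∪ T₂, fun T' hT' =>
      mul_mem (hg T' (Finset.union_subset_left hT')) (hh T' (Finset.union_subset_right hT'))⟩
  inv_mem' := by
    rintro g ⟨T, hg⟩
    exact ⟨T, fun T' hT' => inv_mem (hg T' hT')⟩

variable {α : Type*} [DecidableEq α]

theorem swap_mul_swap_mem_finitaryAlternatingGroup {a b c d : α} (hab : a ≠ b) (hcd : c ≠ d) :
    swap a b * swap c d ∈ finitaryAlternatingGroup α := by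
  refine ⟨{a, b, c, d}, fun T' hT' => ?_⟩
  have hT : ∀ x ∈ ({a, b, c, d} : Finset α), x ∈ T' := fun x hx => hT' hx
  refine ⟨swap ⟨a, hT a (by simp)⟩ ⟨b, hT b (by simp)⟩ *
    swap ⟨c, hT c (by simp)⟩ ⟨d, hT d (by simp)⟩, ?_, by simp⟩
  rw [SetLike.mem_coe, mem_alternatingGroup, Perm.sign_mul, sign_swap (by simpa using hab),
    sign_swap (by simpa using hcd), neg_one_mul, neg_neg]

theorem swap_notMem_finitaryAlternatingGroup {a b : α} (hab : a ≠ b) :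
    swap a b ∉ finitaryAlternatingGroup α := by
  rintro ⟨T, hT⟩
  obtain ⟨σ, hσ, hσab⟩ := hT (insert a (insert b T)) (by grind)
  have ha : a ∈ insert a (insert b T) := by simp
  have hb : b ∈ insert a (insert b T) := by simp
  have hσ_swap : σ = swap ⟨a, ha⟩ ⟨b, hb⟩ := ofSubtype_injective (by rw [hσab, ofSubtype_swap_eq])
  rw [hσ_swap, SetLike.mem_coe, mem_alternatingGroup, sign_swap (by simpa using hab)] at hσ
  exact absurd hσ (by decide)

end FinitaryAlternating

section NormalizerOfSminus

variable {B C : Set ℕ} {g : Perm ℕ}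

theorem swap_mem_splus {a b : ℕ} (ha : a ∈ B) (hb : b ∈ B) : swap a b ∈ Splus B := by
  have hsupp : {x | swap a b x ≠ x} ⊆ {a, b} := fun x hx => by
    by_contra h
    simp only [Set.mem_insert_iff, Set.mem_singleton_iff, not_or] at h
    exact hx (swap_apply_of_ne_of_ne h.1 h.2)
  refine ⟨(Set.toFinite _).subset hsupp, fun x hx => ?_⟩
  rcases hsupp hx with rfl | rfl
  exacts [ha, hb]

theorem splus_mono (h : B ⊆ C) : Splus B ≤ Splus C :=
  fun _ hg => ⟨hg.1, fun x hx => h (hg.2 x hx)⟩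

theorem mapsTo_of_mem_splus (hg : g ∈ Splus B) : Set.MapsTo g B B := by
  intro x hx
  by_cases hgx : g x = x
  · rwa [hgx]
  · exact hg.2 _ fun h => hgx (g.injective h)

theorem image_eq_of_mem_splus (hg : g ∈ Splus B) : g '' B = B := by
  refine (mapsTo_of_mem_splus hg).image_subset.antisymm fun x hx => ⟨g⁻¹ x, ?_, by simp⟩
  exact mapsTo_of_mem_splus (inv_mem hg) hx

theorem sminus_le_splus (B : Set ℕ) : Sminus B ≤ Splus B := by
  rw [Sminus, Subgroup.closure_le]
  rintro _ ⟨a, b, c, d, ha, hb, hc, hd, -, -, rfl⟩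
  exact mul_mem (swap_mem_splus ha hb) (swap_mem_splus hc hd)

theorem sminus_le_finitaryAlternatingGroup (B : Set ℕ) :
    Sminus B ≤ finitaryAlternatingGroup ℕ := by
  rw [Sminus, Subgroup.closure_le]
  rintro _ ⟨a, b, c, d, -, -, -, -, hab, hcd, rfl⟩
  exact swap_mul_swap_mem_finitaryAlternatingGroup hab hcd

theorem swap_notMem_sminus {a b : ℕ} (hab : a ≠ b) : swap a b ∉ Sminus B :=
  fun h => swap_notMem_finitaryAlternatingGroup hab (sminus_le_finitaryAlternatingGroup B h)

theorem map_conj_sminus (g : Perm ℕ) (B : Set ℕ) :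
    (Sminus B).map (MulAut.conj g : Perm ℕ →* Perm ℕ) = Sminus (g '' B) := by
  rw [Sminus, Sminus, MonoidHom.map_closure]
  congr 1
  ext σ
  constructor
  · rintro ⟨_, ⟨a, b, c, d, ha, hb, hc, hd, hab, hcd, rfl⟩, rfl⟩
    refine ⟨g a, g b, g c, g d, ⟨a, ha, rfl⟩, ⟨b, hb, rfl⟩, ⟨c, hc, rfl⟩, ⟨d, hd, rfl⟩,
      g.injective.ne hab, g.injective.ne hcd, ?_⟩
    simp only [MonoidHom.coe_coe, MulAut.conj_apply, swap_apply_apply]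
    group
  · rintro ⟨_, _, _, _, ⟨a, ha, rfl⟩, ⟨b, hb, rfl⟩, ⟨c, hc, rfl⟩, ⟨d, hd, rfl⟩, hab, hcd, rfl⟩
    refine ⟨swap a b * swap c d,
      ⟨a, b, c, d, ha, hb, hc, hd, ne_of_apply_ne g hab, ne_of_apply_ne g hcd, rfl⟩, ?_⟩
    simp only [MonoidHom.coe_coe, MulAut.conj_apply, swap_apply_apply]
    group

theorem exists_mem_sminus_apply_ne (hB : B.Infinite) {b : ℕ} (hb : b ∈ B) :
    ∃ σ ∈ Sminus B, σ b ≠ b := by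
  obtain ⟨c, hcB, hcb⟩ := (hB.sdiff (Set.finite_singleton b)).nonempty
  obtain ⟨d, hdB, hdbc⟩ := (hB.sdiff (Set.toFinite {b, c})).nonempty
  have hbc : b ≠ c := fun h => hcb (h ▸ rfl)
  have hbd : b ≠ d := fun h => hdbc (by simp [h])
  have hcd : c ≠ d := fun h => hdbc (by simp [h])
  refine ⟨swap b c * swap c d,
    Subgroup.subset_closure ⟨b, c, c, d, hb, hcB, hcB, hdB, hbc, hcd, rfl⟩, ?_⟩
  rw [Perm.mul_apply, swap_apply_of_ne_of_ne hbc hbd, swap_apply_left]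
  exact hbc.symm

theorem subset_of_sminus_le (hB : B.Infinite) (h : Sminus B ≤ Sminus C) : B ⊆ C := by
  intro b hb
  obtain ⟨σ, hσ, hσb⟩ := exists_mem_sminus_apply_ne hB hb
  exact (sminus_le_splus C (h hσ)).2 b hσb

theorem mem_normalizer_sminus_iff (hB : B.Infinite) :
    g ∈ Subgroup.normalizer (Sminus B : Set (Perm ℕ)) ↔ g '' B = B := by
  rw [Subgroup.mem_normalizer_iff_map_conj_eq, map_conj_sminus]
  refine ⟨fun h => ?_, fun h => by rw [h]⟩
  have hgB : (g '' B).Infinite := hB.image g.injective.injOn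
  exact (subset_of_sminus_le hgB h.le).antisymm (subset_of_sminus_le hB h.ge)

end NormalizerOfSminus

/-- The normalizer in `S_ℕ` of the finitary alternating group `S⁻(B)` on an
infinite set `B` equals `{g ∈ S_ℕ : g(B) = B}`; in particular `S⁻(B)` is not
self-normalizing since `S⁺(B) ⊆ N(S⁻(B))` and `S⁺(B) ≠ S⁻(B)`. -/
theorem stmt10 (B : Set ℕ) (hB : B.Infinite) :
    (∀ g ∈ SN, (g ∈ Subgroup.normalizer (Sminus B : Set (Equiv.Perm ℕ)) ↔ g '' B = B)) ∧
    Splus B ≤ Subgroup.normalizer (Sminus B : Set (Equiv.Perm ℕ)) ∧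
    Sminus B ≠ Splus B ∧
    Subgroup.normalizer (Sminus B : Set (Equiv.Perm ℕ)) ⊓ SN ≠ Sminus B := by
  have hsplus : Splus B ≤ Subgroup.normalizer (Sminus B : Set (Perm ℕ)) :=
    fun g hg => (mem_normalizer_sminus_iff hB).2 (image_eq_of_mem_splus hg)
  obtain ⟨a, ha, b, hb, hab⟩ := hB.nontrivial
  have hswap : swap a b ∈ Splus B := swap_mem_splus ha hb
  refine ⟨fun g _ => mem_normalizer_sminus_iff hB, hsplus, fun h => ?_, fun h => ?_⟩
  · exact swap_notMem_sminus hab (h ▸ hswap)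
  · apply swap_notMem_sminus hab
    rw [← h]
    exact ⟨hsplus hswap, splus_mono (Set.subset_univ B) hswap⟩
end

section
/- There is no finitely additive S_ℕ-invariant probability measure on the space Part(2) of partitions of ℕ into blocks of size exactly 2. Equivalently (key combinatorial step): for any perfect matching a on ℕ (symmetric 0-1 matrix a_{ij} with exactly one 1 in each row, zero diagonal), the Cesàro averages (1/n!) Σ_{g ∈ S_n} a_{g(i), g(j)} tend to 0 as n → ∞, for every fixed pair i ≠ j. -/
/-!
Averaging over `S_n` is invariant under right multiplication by the transposition `(j k)`, so
`S = ∑_g a(g i, g j)` equals `∑_g a(g i, g k)` for each of the `n - 1` points `k ≠ i`. Summing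
over these `k` gives `(n - 1) S = ∑_g ∑_{k ≠ i} a(g i, g k) ≤ n!`, since every row of a perfect
matching contains a single `1`. Hence the average `S / n!` is at most `1 / (n - 1)`.
-/

/-- Extension of a permutation of `Fin n` to `ℕ`, fixing all points `≥ n`. -/
def extPerm (n : ℕ) (g : Equiv.Perm (Fin n)) (x : ℕ) : ℕ :=
  if h : x < n then (g ⟨x, h⟩ : ℕ) else x

open Finset Filter

lemma extPerm_of_lt {n x : ℕ} (g : Equiv.Perm (Fin n)) (hx : x < n) :
    extPerm n g x = g ⟨x, hx⟩ := by
  simp [extPerm, hx]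

lemma sum_le_one_of_existsUnique_eq_one {α : Type*} (f : α → ℝ)
    (h01 : ∀ y, f y = 0 ∨ f y = 1) (hone : ∃! y, f y = 1) (s : Finset α) :
    ∑ y ∈ s, f y ≤ 1 := by
  classical
  obtain ⟨y₀, hy₀, huniq⟩ := hone
  have hf : ∀ y, f y = if y = y₀ then 1 else 0 := by
    intro y
    split_ifs with h
    · rw [h, hy₀]
    · exact (h01 y).resolve_right (mt (huniq y) h)
  simp_rw [hf, sum_ite_eq']
  split_ifs <;> norm_num

lemma Equiv.Perm.sum_apply_apply_eq_of_ne {α M : Type*} [Fintype α] [DecidableEq α]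
    [AddCommMonoid M] (f : α → α → M) {i j k : α} (hij : i ≠ j) (hik : i ≠ k) :
    ∑ g : Equiv.Perm α, f (g i) (g j) = ∑ g : Equiv.Perm α, f (g i) (g k) := by
  rw [← Equiv.sum_comp (Equiv.mulRight (Equiv.swap j k))]
  refine sum_congr rfl fun g _ => ?_
  simp [Equiv.swap_apply_of_ne_of_ne hij hik]

lemma card_sub_one_mul_sum_perm_le_factorial {α : Type*} [Fintype α] [DecidableEq α]
    (f : α → α → ℝ) (hrow : ∀ x (s : Finset α), ∑ y ∈ s, f x y ≤ 1) {i j : α} (hij : i ≠ j) :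
    ((Fintype.card α : ℝ) - 1) * ∑ g : Equiv.Perm α, f (g i) (g j) ≤
      (Fintype.card α).factorial := by
  calc ((Fintype.card α : ℝ) - 1) * ∑ g : Equiv.Perm α, f (g i) (g j)
      = ∑ k ∈ univ.erase i, ∑ g : Equiv.Perm α, f (g i) (g j) := by
        rw [sum_const, nsmul_eq_mul, cast_card_erase_of_mem (mem_univ i), card_univ]
    _ = ∑ k ∈ univ.erase i, ∑ g : Equiv.Perm α, f (g i) (g k) :=
        sum_congr rfl fun k hk =>
          Equiv.Perm.sum_apply_apply_eq_of_ne f hij (ne_of_mem_erase hk).symm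
    _ = ∑ g : Equiv.Perm α, ∑ y ∈ (univ.erase i).map g.toEmbedding, f (g i) y := by
        rw [sum_comm]
        simp only [sum_map, Equiv.coe_toEmbedding]
    _ ≤ ∑ _g : Equiv.Perm α, (1 : ℝ) := sum_le_sum fun g _ => hrow (g i) _
    _ = (Fintype.card α).factorial := by simp [Fintype.card_perm]

lemma sum_extPerm_div_factorial_le {a : ℕ → ℕ → ℝ}
    (h01 : ∀ i j, a i j = 0 ∨ a i j = 1) (hmatch : ∀ i, ∃! j, a i j = 1)
    {i j n : ℕ} (hij : i ≠ j) (hi : i < n) (hj : j < n) :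
    (∑ g : Equiv.Perm (Fin n), a (extPerm n g i) (extPerm n g j)) / n.factorial ≤
      ((n : ℝ) - 1)⁻¹ := by
  have hrow (x : Fin n) (s : Finset (Fin n)) : ∑ y ∈ s, a x y ≤ 1 := by
    simpa using
      sum_le_one_of_existsUnique_eq_one (a x) (h01 x) (hmatch x) (s.map Fin.valEmbedding)
  have hne : (⟨i, hi⟩ : Fin n) ≠ ⟨j, hj⟩ := by simpa [Fin.ext_iff] using hij
  have hkey := card_sub_one_mul_sum_perm_le_factorial (fun x y : Fin n => a x y) hrow hne
  simp only [Fintype.card_fin] at hkey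
  have hn : (0 : ℝ) < n - 1 := by
    have : (2 : ℝ) ≤ n := by exact_mod_cast (show 2 ≤ n by omega)
    linarith
  simp only [extPerm_of_lt _ hi, extPerm_of_lt _ hj]
  rw [div_le_iff₀ (by positivity), ← div_eq_inv_mul, le_div_iff₀ hn, mul_comm]
  exact hkey

theorem stmt15_general (a : ℕ → ℕ → ℝ)
    (h01 : ∀ i j, a i j = 0 ∨ a i j = 1)
    (hmatch : ∀ i, ∃! j, a i j = 1)
    (i j : ℕ) (hij : i ≠ j) :
    Filter.Tendsto
      (fun n => (∑ g : Equiv.Perm (Fin n), a (extPerm n g i) (extPerm n g j)) /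
        (Nat.factorial n : ℝ))
      Filter.atTop (nhds 0) := by
  have hnonneg : ∀ x y, 0 ≤ a x y := fun x y => by rcases h01 x y with h | h <;> simp [h]
  have hbound : Tendsto (fun n : ℕ => ((n : ℝ) - 1)⁻¹) atTop (nhds 0) :=
    tendsto_inv_atTop_zero.comp
      (tendsto_atTop_add_const_right _ (-1) tendsto_natCast_atTop_atTop)
  refine tendsto_of_tendsto_of_tendsto_of_le_of_le' tendsto_const_nhds hbound
    (Eventually.of_forall fun n =>
      div_nonneg (sum_nonneg fun g _ => hnonneg _ _) n.factorial.cast_nonneg) ?_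
  filter_upwards [eventually_gt_atTop (max i j)] with n hn
  exact sum_extPerm_div_factorial_le h01 hmatch hij (by omega) (by omega)

/-- Key combinatorial step in the proof that there is no `S_ℕ`-invariant probability
measure on the space of partitions of `ℕ` into blocks of size 2: for any perfect
matching `a` on `ℕ` (symmetric 0–1 matrix with zero diagonal and exactly one `1` in
each row), the Cesàro averages `(1/n!) ∑_{g ∈ Sₙ} a(g i, g j)` tend to `0` for every
fixed pair `i ≠ j`. -/
theorem stmt15 (a : ℕ → ℕ → ℝ)
    (hsymm : ∀ i j, a i j = a j i)
    (hdiag : ∀ i, a i i = 0)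
    (h01 : ∀ i j, a i j = 0 ∨ a i j = 1)
    (hmatch : ∀ i, ∃! j, a i j = 1)
    (i j : ℕ) (hij : i ≠ j) :
    Filter.Tendsto
      (fun n => (∑ g : Equiv.Perm (Fin n), a (extPerm n g i) (extPerm n g j)) /
        (Nat.factorial n : ℝ))
      Filter.atTop (nhds 0) :=
  stmt15_general a h01 hmatch i j hij
end

section
/- For the Bernoulli measure μ_α on ℤ^ℕ with marginal distribution α, and a finitely supported permutation g of ℕ, the measure of the set of fixed points of g acting on ℤ^ℕ equals ∏_{n>1} (Σ_{v ∈ ℤ} α_v^n)^{c_n(g)}, where c_n(g) is the number of cycles of g of length n. -/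
/-!
A point `x` is fixed by `g` iff it is constant on every cycle of `g`. Only the finitely many
nontrivial cycles, all inside the support `S` of `g`, impose a condition, so the event is the
disjoint union, over the common values `f O` taken on the cycles `O`, of the cylinders
`{x | x i = f (cycle of i) for i ∈ S}`, of measure `∏_O α(f O)^|O|`. Summing over `f` factorizes
into `∏_O ∑_v α_v^|O|`, and grouping the cycles by length gives the product over `n ≥ 2`.
-/

open MeasureTheory

/-- The number of cycles (orbits) of length `n` of a permutation `g` of `ℕ`. -/
noncomputable def cycleCount (g : Equiv.Perm ℕ) (n : ℕ) : ℕ :=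
  {O : Set ℕ | (∃ x : ℕ, O = Set.range fun k : ℤ => (g ^ k) x) ∧ O.ncard = n}.ncard

open Finset

theorem ENNReal.tsum_fin_pi_prod {κ : Type*} :
    ∀ (n : ℕ) (f : Fin n → κ → ENNReal),
      ∑' x : Fin n → κ, ∏ i, f i (x i) = ∏ i, ∑' k, f i k
  | 0, f => by simp
  | n + 1, f => by
    rw [← (Fin.consEquiv fun _ => κ).tsum_eq, ENNReal.tsum_prod', Fin.prod_univ_succ,
      ← tsum_fin_pi_prod n, ← ENNReal.tsum_mul_right]
    refine tsum_congr fun a => ?_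
    rw [← ENNReal.tsum_mul_left]
    simp [Fin.consEquiv, Fin.prod_univ_succ]

theorem ENNReal.tsum_pi_prod {ι κ : Type*} [Fintype ι] (f : ι → κ → ENNReal) :
    ∑' x : ι → κ, ∏ i, f i (x i) = ∏ i, ∑' k, f i k := by
  let e := (Fintype.equivFin ι).symm
  rw [← (e.arrowCongr (.refl κ)).tsum_eq, ← e.prod_comp, ← ENNReal.tsum_fin_pi_prod]
  refine tsum_congr fun x => ?_
  rw [← e.prod_comp]
  simp [Equiv.arrowCongr]

section Cylinders

variable {ι β : Type*} [MeasurableSpace β] [MeasurableSingletonClass β]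

theorem measurableSet_setOf_forall_mem_eq (s : Finset ι) (f : ι → β) :
    MeasurableSet {x : ι → β | ∀ i ∈ s, x i = f i} := by
  simp only [Set.ofPred_forall]
  exact .biInter s.countable_toSet fun i _ =>
    show MeasurableSet ((fun x : ι → β => x i) ⁻¹' {f i}) from
      measurable_pi_apply i (measurableSet_singleton _)

theorem measure_setOf_eq_on_fibers [Countable β] [Nonempty β] {μ : Measure (ι → β)}
    {α : β → ENNReal}
    (hcyl : ∀ (s : Finset ι) (f : ι → β), μ {x | ∀ i ∈ s, x i = f i} = ∏ i ∈ s, α (f i))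
    {κ : Type*} [DecidableEq κ] (s : Finset ι) (c : ι → κ) :
    μ {x | ∀ i ∈ s, ∀ j ∈ s, c i = c j → x i = x j} =
      ∏ k ∈ s.image c, ∑' v, α v ^ #{i ∈ s | c i = k} := by
  set t := s.image c
  have hrep : ∀ k : t, ∃ i ∈ s, c i = k := fun k => mem_image.1 k.2
  choose rep hrep_mem hrep_eq using hrep
  let extend (f : t → β) (k : κ) : β := if h : k ∈ t then f ⟨k, h⟩ else Classical.arbitrary β
  have extend_coe (f : t → β) (k : t) : extend f k = f k := dif_pos k.2
  let cyl (f : t → β) := {x : ι → β | ∀ i ∈ s, x i = extend f (c i)}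
  have hunion : {x | ∀ i ∈ s, ∀ j ∈ s, c i = c j → x i = x j} = ⋃ f, cyl f := by
    ext x
    simp only [Set.mem_ofPred_eq, Set.mem_iUnion, cyl]
    constructor
    · intro hx
      refine ⟨fun k => x (rep k), fun i hi => ?_⟩
      let k : t := ⟨c i, mem_image_of_mem c hi⟩
      exact (hx i hi (rep k) (hrep_mem k) (hrep_eq k).symm).trans
        (extend_coe (fun k => x (rep k)) k).symm
    · rintro ⟨f, hf⟩ i hi j hj hij
      rw [hf i hi, hf j hj, hij]
  have hdisj : Pairwise (Function.onFun Disjoint cyl) := by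
    intro f f' hne
    refine Set.disjoint_left.2 fun x hf hf' => hne (funext fun k => ?_)
    rw [← extend_coe f, ← extend_coe f', ← hrep_eq k, ← hf _ (hrep_mem k), ← hf' _ (hrep_mem k)]
  have hmeasure_cyl (f : t → β) : μ (cyl f) = ∏ k : t, α (f k) ^ #{i ∈ s | c i = k} := by
    rw [hcyl s, prod_comp (fun k => α (extend f k)), ← prod_coe_sort]
    exact prod_congr rfl fun k _ => by rw [extend_coe]
  rw [hunion, measure_iUnion hdisj fun f => measurableSet_setOf_forall_mem_eq s _]
  simp_rw [hmeasure_cyl]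
  rw [ENNReal.tsum_pi_prod fun (k : t) v => α v ^ #{i ∈ s | c i = k}]
  exact prod_coe_sort t fun k => ∑' v, α v ^ #{i ∈ s | c i = k}

end Cylinders

namespace Equiv.Perm

variable {α : Type*} {g : Perm α}

/-- Definitionally `Set.range fun k : ℤ => (g ^ k) i`, the orbit counted by `cycleCount`. -/
def cycleSet (g : Perm α) (i : α) : Set α := {j | g.SameCycle i j}

theorem cycleSet_eq_cycleSet_iff {i j : α} : g.cycleSet i = g.cycleSet j ↔ g.SameCycle i j :=
  ⟨fun h => show j ∈ g.cycleSet i from h ▸ SameCycle.rfl,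
    fun h => Set.ext fun _ => ⟨h.symm.trans, h.trans⟩⟩

theorem apply_zpow_apply_of_comp_eq {β : Type*} {x : α → β} (hx : x ∘ g = x) (k : ℤ) (i : α) :
    x ((g ^ k) i) = x i := by
  induction k using Int.induction_on generalizing i with
  | zero => rfl
  | succ k ih => rw [zpow_add_one, mul_apply, ih]; exact congrFun hx i
  | pred k ih => rw [zpow_sub_one, mul_apply, ih, ← congrFun hx (g⁻¹ i)]; simp

theorem comp_eq_self_iff_forall_sameCycle {β : Type*} {x : α → β} :
    x ∘ g = x ↔ ∀ i j, g.SameCycle i j → x i = x j :=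
  ⟨fun hx i _ ⟨k, hk⟩ => hk ▸ (apply_zpow_apply_of_comp_eq hx k i).symm,
    fun h => funext fun i => (h i (g i) ⟨1, rfl⟩).symm⟩

theorem cycleSet_of_apply_eq {i : α} (hi : g i = i) : g.cycleSet i = {i} :=
  Set.ext fun _ => ⟨fun h => (h.eq_of_left hi).symm, fun h => h ▸ SameCycle.rfl⟩

section FiniteSupport

variable (hg : {i | g i ≠ i}.Finite)
include hg

theorem cycleSet_subset_of_apply_ne {i : α} (hi : g i ≠ i) : g.cycleSet i ⊆ hg.toFinset :=
  fun _ hj => by simpa using (hj.apply_eq_self_iff).not.1 hi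

theorem two_le_ncard_cycleSet {i : α} (hi : g i ≠ i) : 2 ≤ (g.cycleSet i).ncard :=
  (Set.one_lt_ncard ((hg.toFinset.finite_toSet).subset (cycleSet_subset_of_apply_ne hg hi))).2
    ⟨g i, ⟨1, rfl⟩, i, SameCycle.rfl, hi⟩

theorem card_filter_cycleSet_eq {i : α} (hi : g i ≠ i) [DecidableEq (Set α)] :
    #{j ∈ hg.toFinset | g.cycleSet j = g.cycleSet i} = (g.cycleSet i).ncard := by
  rw [← Set.ncard_coe_finset]
  congr 1
  ext j
  simp only [coe_filter, Set.mem_ofPred_eq, cycleSet_eq_cycleSet_iff]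
  exact ⟨fun h => h.2.symm, fun h => ⟨cycleSet_subset_of_apply_ne hg hi h, h.symm⟩⟩

theorem forall_sameCycle_iff {β : Type*} (x : α → β) :
    (∀ i j, g.SameCycle i j → x i = x j) ↔
      ∀ i ∈ hg.toFinset, ∀ j ∈ hg.toFinset, g.cycleSet i = g.cycleSet j → x i = x j := by
  simp only [cycleSet_eq_cycleSet_iff]
  refine ⟨fun h i _ j _ => h i j, fun h i j hij => ?_⟩
  by_cases hi : g i = i
  · rw [hij.eq_of_left hi]
  · exact h i (by simpa using hi) j (by simpa using hij.apply_eq_self_iff.not.1 hi) hij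

end FiniteSupport

end Equiv.Perm

open Equiv.Perm

section CycleCount

variable {g : Equiv.Perm ℕ} (hg : {i | g i ≠ i}.Finite) [DecidableEq (Set ℕ)]
include hg

theorem cycleCount_eq_card_filter {n : ℕ} (hn : 2 ≤ n) :
    cycleCount g n = #{O ∈ hg.toFinset.image g.cycleSet | O.ncard = n} := by
  rw [cycleCount, ← Set.ncard_coe_finset]
  congr 1
  ext O
  simp only [coe_filter, mem_image, Set.Finite.mem_toFinset, Set.mem_ofPred_eq]
  refine and_congr_left fun hO => ⟨?_, ?_⟩
  · rintro ⟨i, rfl⟩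
    refine ⟨i, fun hi => ?_, rfl⟩
    have : (g.cycleSet i).ncard = 1 := by rw [cycleSet_of_apply_eq hi, Set.ncard_singleton]
    change (g.cycleSet i).ncard = n at hO
    omega
  · rintro ⟨i, -, rfl⟩
    exact ⟨i, rfl⟩

theorem finprod_pow_cycleCount_eq_prod {M : Type*} [CommMonoid M] (f : ℕ → M) :
    ∏ᶠ (n) (_ : 2 ≤ n), f n ^ cycleCount g n = ∏ O ∈ hg.toFinset.image g.cycleSet, f O.ncard := by
  set T := hg.toFinset.image g.cycleSet
  have two_le : ∀ n ∈ T.image Set.ncard, 2 ≤ n := by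
    simp only [T, mem_image, Set.Finite.mem_toFinset]
    rintro _ ⟨_, ⟨i, hi, rfl⟩, rfl⟩
    exact two_le_ncard_cycleSet hg hi
  rw [prod_comp f Set.ncard, finprod_cond_eq_prod_of_cond_iff _ (t := T.image Set.ncard)]
  · exact prod_congr rfl fun n hn => by rw [cycleCount_eq_card_filter hg (two_le n hn)]
  · intro n hfn
    refine ⟨fun hn => ?_, two_le n⟩
    by_contra hnT
    refine hfn ?_
    rw [cycleCount_eq_card_filter hg hn, card_eq_zero.2, pow_zero]
    exact filter_eq_empty_iff.2 fun O hO hOn => hnT (mem_image.2 ⟨O, hO, hOn⟩)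

end CycleCount

theorem stmt17_general (α : ℤ → ENNReal) (μ : Measure (ℕ → ℤ))
    (hcyl : ∀ (s : Finset ℕ) (f : ℕ → ℤ),
      μ {x : ℕ → ℤ | ∀ i ∈ s, x i = f i} = ∏ i ∈ s, α (f i))
    (g : Equiv.Perm ℕ) (hg : {x : ℕ | g x ≠ x}.Finite) :
    μ {x : ℕ → ℤ | (fun n => x (g⁻¹ n)) = x} =
      ∏ᶠ (n : ℕ) (_ : 2 ≤ n), (∑' v : ℤ, α v ^ n) ^ cycleCount g n := by
  classical
  have hfixed : {x : ℕ → ℤ | (fun n => x (g⁻¹ n)) = x} =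
      {x | ∀ i ∈ hg.toFinset, ∀ j ∈ hg.toFinset, g.cycleSet i = g.cycleSet j → x i = x j} := by
    refine Set.ext fun x => ?_
    change x ∘ ⇑g⁻¹ = x ↔ _
    simp only [comp_eq_self_iff_forall_sameCycle, sameCycle_inv, forall_sameCycle_iff hg,
      Set.mem_ofPred_eq]
  rw [hfixed, measure_setOf_eq_on_fibers hcyl, finprod_pow_cycleCount_eq_prod hg]
  refine prod_congr rfl fun O hO => ?_
  obtain ⟨i, hi, rfl⟩ := mem_image.1 hO
  rw [card_filter_cycleSet_eq hg (by simpa using hi)]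

/-- For the Bernoulli measure `μ_α` on `ℤ^ℕ` with marginal `α` and a finitely
supported permutation `g` of `ℕ`, the measure of the set of fixed points of `g`
acting on `ℤ^ℕ` equals `∏_{n>1} p_n(α)^{c_n(g)}`, where `p_n(α) = ∑_v α_v^n` is the
Newton power sum and `c_n(g)` is the number of cycles of `g` of length `n`. -/
theorem stmt17 (α : ℤ → ENNReal) (hα : ∑' v : ℤ, α v = 1)
    (μ : Measure (ℕ → ℤ)) [IsProbabilityMeasure μ]
    (hcyl : ∀ (s : Finset ℕ) (f : ℕ → ℤ),
      μ {x : ℕ → ℤ | ∀ i ∈ s, x i = f i} = ∏ i ∈ s, α (f i))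
    (g : Equiv.Perm ℕ) (hg : {x : ℕ | g x ≠ x}.Finite) :
    μ {x : ℕ → ℤ | (fun n => x (g⁻¹ n)) = x} =
      ∏ᶠ (n : ℕ) (_ : 2 ≤ n), (∑' v : ℤ, α v ^ n) ^ cycleCount g n :=
  stmt17_general α μ hcyl g hg
end
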